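/- arXiv:1401.4697 — 2 statements merged into one kernel-verified Lean document; each statement's English description precedes it below -/
import Mathlib

section
/- Substitution-Metasubstitution Lemma: given terms 𝕞₁:[m₁],…,𝕞_k:[m_k] ▹ Γ ⊢ tᵢ (1 ≤ i ≤ n), Θ ▹ Γ, x⃗ⱼ ⊢ sⱼ (1 ≤ j ≤ k, where x⃗ⱼ is a list of mⱼ variables), and 𝕞₁:[m₁],…,𝕞_k:[m_k] ▹ x₁,…,xₙ ⊢ t, one has the equality of terms in context Θ ▹ Γ: t{xᵢ := tᵢ}_{i∈[n]}{𝕞ⱼ := (x⃗ⱼ)sⱼ}_{j∈[k]} = t{𝕞ⱼ := (x⃗ⱼ)sⱼ}_{j∈[k]}{xᵢ := tᵢ{𝕞ⱼ := (x⃗ⱼ)sⱼ}_{j∈[k]}}_{i∈[n]}. -/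
/-! ## Second-order syntax (de Bruijn representation)

An arity/sequence `(m₁,…,m_k) ∈ ℕ*` is a `Ctxa`.  A second-order signature is a set of
operators with such arities.  Terms in a metavariable context (given by a type `M` of
metavariables with meta-arities `mar : M → ℕ`) and a variable context of size `n` are
generated by variables, metavariables applied to their parameters, and operators binding
variables in their arguments.  Working with de Bruijn indices gives terms up to
α-equivalence. -/

/-- A finite sequence `(m₁,…,m_k)` of natural numbers (an element of ℕ*). -/
structure Ctxa where
  len : ℕ
  ar : Fin len → ℕ

/-- A second-order signature: a set of operators with arities `(n₁,…,n_k) ∈ ℕ*`;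
an operator of arity `(n₁,…,n_k)` takes `k` arguments and binds `nᵢ` variables in the
`i`-th argument. -/
structure SOSig : Type 1 where
  Op : Type
  arity : Op → Ctxa

namespace SO

/-- Second-order terms over the signature `S`, in metavariable context `(M, mar)` and
variable context of size `n` (variables are de Bruijn indices `Fin n`, so terms are
automatically identified up to α-equivalence). -/
inductive Term (S : SOSig) (M : Type) (mar : M → ℕ) : ℕ → Type
  | var {n : ℕ} : Fin n → Term S M mar n
  | mvar {n : ℕ} (m : M) (ts : Fin (mar m) → Term S M mar n) : Term S M mar n
  | op {n : ℕ} (o : S.Op)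
      (ts : ∀ i : Fin (S.arity o).len, Term S M mar (n + (S.arity o).ar i)) :
      Term S M mar n

namespace Term

variable {S : SOSig} {M M' : Type} {mar : M → ℕ} {mar' : M' → ℕ}

/-- Cast a term along an equality of variable-context sizes. -/
def castCtx {n n' : ℕ} (h : n = n') (t : Term S M mar n) : Term S M mar n' := h ▸ t

/-- Extend a renaming to a context enlarged by `p` bound variables. -/
def extRen {n n' : ℕ} (ρ : Fin n → Fin n') (p : ℕ) : Fin (n + p) → Fin (n' + p) :=
  Fin.addCases (fun j => Fin.castAdd p (ρ j)) (fun j => Fin.natAdd n' j)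

/-- Renaming of variables. -/
def rename : ∀ {n n' : ℕ}, Term S M mar n → (Fin n → Fin n') → Term S M mar n'
  | _, _, .var x, ρ => .var (ρ x)
  | _, _, .mvar m ts, ρ => .mvar m (fun j => rename (ts j) ρ)
  | _, _, .op o ts, ρ => .op o (fun i => rename (ts i) (extRen ρ _))

/-- Weakening of a term by `p` fresh variables (added at the end of the context). -/
def weaken {n : ℕ} (p : ℕ) (t : Term S M mar n) : Term S M mar (n + p) :=
  rename t (Fin.castAdd p)

/-- Extend a simultaneous substitution to a context enlarged by `p` bound variables
(the bound variables are mapped to themselves). -/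
def extSub {n n' : ℕ} (σ : Fin n → Term S M mar n') (p : ℕ) :
    Fin (n + p) → Term S M mar (n' + p) :=
  Fin.addCases (fun j => weaken p (σ j)) (fun j => .var (Fin.natAdd n' j))

/-- Capture-avoiding simultaneous substitution `t{xᵢ := σ(i)}` of terms for variables. -/
def subst : ∀ {n n' : ℕ}, Term S M mar n → (Fin n → Term S M mar n') → Term S M mar n'
  | _, _, .var x, σ => σ x
  | _, _, .mvar m ts, σ => .mvar m (fun j => subst (ts j) σ)
  | _, _, .op o ts, σ => .op o (fun i => subst (ts i) (extSub σ _))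

/-- The renaming inserting `p` fresh variables in the middle of a context `n' + a`
(between the first `n'` variables and the last `a` bound ones). -/
def midWeak (n' p a : ℕ) : Fin (n' + a) → Fin (n' + p + a) :=
  Fin.addCases (fun j => Fin.castAdd a (Fin.castAdd p j)) (fun j => Fin.natAdd (n' + p) j)

/-- Metasubstitution `t{𝕞 := (x⃗_𝕞)s(𝕞)}` (simultaneously renaming the variables of `t`
along `ρ`): each metavariable `𝕞` of meta-arity `mar 𝕞` is replaced by the term
`s 𝕞`, which lives in the target context extended by `mar 𝕞` abstracted variables;
the parameters of `𝕞` are substituted for those abstracted variables. -/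
def msubst : ∀ {n n' : ℕ}, Term S M mar n → (Fin n → Fin n') →
    (∀ m : M, Term S M' mar' (n' + mar m)) → Term S M' mar' n'
  | _, _, .var x, ρ, _ => .var (ρ x)
  | _, _, .mvar m ts, ρ, s =>
      subst (s m) (Fin.addCases (fun j => .var j) (fun j => msubst (ts j) ρ s))
  | _, _, .op o ts, ρ, s =>
      .op o (fun i => msubst (ts i) (extRen ρ _) (fun m => rename (s m) (midWeak _ _ _)))

end Term

end SO
namespace SO
namespace Term
/-- The generic expansion `𝕞[x₁,…,x_{mar 𝕞}]` of a metavariable, in a context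
`g + mar 𝕞` whose last `mar 𝕞` variables are the parameters. -/
def genMvar {S : SOSig} {M : Type} {mar : M → ℕ} (g : ℕ) (m : M) :
    Term S M mar (g + mar m) :=
  .mvar m (fun v => .var (Fin.natAdd g v))
end Term
end SO

open SO SO.Term

namespace SO.Term

variable {S : SOSig} {M M' : Type} {mar : M → ℕ} {mar' : M' → ℕ}

@[simp] theorem extRen_castAdd {n n' : ℕ} (π : Fin n → Fin n') (p : ℕ) (x : Fin n) :
    extRen π p (Fin.castAdd p x) = Fin.castAdd p (π x) := by
  simp [extRen]

@[simp] theorem extRen_natAdd {n n' : ℕ} (π : Fin n → Fin n') (p : ℕ) (x : Fin p) :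
    extRen π p (Fin.natAdd n x) = Fin.natAdd n' x := by
  simp [extRen]

@[simp] theorem extSub_castAdd {n n' : ℕ} (σ : Fin n → Term S M mar n') (p : ℕ) (x : Fin n) :
    extSub σ p (Fin.castAdd p x) = weaken p (σ x) := by
  simp [extSub]

@[simp] theorem extSub_natAdd {n n' : ℕ} (σ : Fin n → Term S M mar n') (p : ℕ) (x : Fin p) :
    extSub σ p (Fin.natAdd n x) = .var (Fin.natAdd n' x) := by
  simp [extSub]

@[simp] theorem midWeak_castAdd (n' p a : ℕ) (x : Fin n') :
    midWeak n' p a (Fin.castAdd a x) = Fin.castAdd a (Fin.castAdd p x) := by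
  simp [midWeak]

@[simp] theorem midWeak_eq_extRen (q a p : ℕ) :
    midWeak q a p = extRen (Fin.castAdd a) p := by
  funext x
  induction x using Fin.addCases with
  | left x => simp [midWeak, extRen]
  | right x => simp [midWeak, extRen]

@[simp] theorem midWeak_natAdd (n' p a : ℕ) (x : Fin a) :
    midWeak n' p a (Fin.natAdd n' x) = Fin.natAdd (n' + p) x := by
  simp [midWeak]

theorem rename_rename : ∀ {n n' n'' : ℕ} (t : Term S M mar n)
    (π₁ : Fin n → Fin n') (π₂ : Fin n' → Fin n''),
    rename (rename t π₁) π₂ = rename t (fun x => π₂ (π₁ x))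
  | _, _, _, .var x, _, _ => rfl
  | _, _, _, .mvar m ts, π₁, π₂ => by
      simp only [rename]
      congr 1; funext j; exact rename_rename (ts j) _ _
  | _, _, _, .op o ts, π₁, π₂ => by
      simp only [rename]
      congr 1; funext i
      rw [rename_rename]
      congr 1; funext x
      induction x using Fin.addCases with
      | left x => simp
      | right x => simp

theorem subst_rename : ∀ {n n' n'' : ℕ} (t : Term S M mar n)
    (π : Fin n → Fin n') (σ : Fin n' → Term S M mar n''),
    subst (rename t π) σ = subst t (fun x => σ (π x))
  | _, _, _, .var x, _, _ => rfl
  | _, _, _, .mvar m ts, π, σ => by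
      simp only [rename, subst]
      congr 1; funext j; exact subst_rename (ts j) _ _
  | _, _, _, .op o ts, π, σ => by
      simp only [rename, subst]
      congr 1; funext i
      rw [subst_rename]
      congr 1; funext x
      induction x using Fin.addCases with
      | left x => simp
      | right x => simp

theorem rename_subst : ∀ {n n' n'' : ℕ} (t : Term S M mar n)
    (σ : Fin n → Term S M mar n') (π : Fin n' → Fin n''),
    rename (subst t σ) π = subst t (fun x => rename (σ x) π)
  | _, _, _, .var x, _, _ => rfl
  | _, _, _, .mvar m ts, σ, π => by
      simp only [rename, subst]
      congr 1; funext j; exact rename_subst (ts j) _ _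
  | _, _, _, .op o ts, σ, π => by
      simp only [rename, subst]
      congr 1; funext i
      rw [rename_subst]
      congr 1; funext x
      induction x using Fin.addCases with
      | left x =>
          simp only [extSub_castAdd, weaken, rename_rename]
          congr 1; funext y; simp
      | right x => simp [rename]

theorem subst_var : ∀ {n : ℕ} (t : Term S M mar n), subst t (fun x => .var x) = t
  | _, .var x => rfl
  | _, .mvar m ts => by
      simp only [subst]
      congr 1; funext j; exact subst_var (ts j)
  | n, .op o ts => by
      simp only [subst]
      congr 1; funext i
      have : (extSub (fun x => (Term.var x : Term S M mar n)) ((S.arity o).ar i))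
          = fun x => .var x := by
        funext x
        induction x using Fin.addCases with
        | left x => simp [weaken, rename]
        | right x => simp
      rw [this, subst_var]

theorem subst_subst : ∀ {n n' n'' : ℕ} (t : Term S M mar n)
    (σ : Fin n → Term S M mar n') (τ : Fin n' → Term S M mar n''),
    subst (subst t σ) τ = subst t (fun x => subst (σ x) τ)
  | _, _, _, .var x, _, _ => rfl
  | _, _, _, .mvar m ts, σ, τ => by
      simp only [subst]
      congr 1; funext j; exact subst_subst (ts j) _ _
  | _, _, _, .op o ts, σ, τ => by
      simp only [subst]
      congr 1; funext i
      rw [subst_subst]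
      congr 1; funext x
      induction x using Fin.addCases with
      | left x =>
          simp only [extSub_castAdd, weaken, subst_rename, rename_subst]
      | right x => simp [subst]

theorem msubst_rename : ∀ {n n' n'' : ℕ} (t : Term S M mar n)
    (π : Fin n → Fin n') (ρ : Fin n' → Fin n'') (s : ∀ m : M, Term S M' mar' (n'' + mar m)),
    msubst (rename t π) ρ s = msubst t (fun x => ρ (π x)) s
  | _, _, _, .var x, _, _, _ => rfl
  | _, _, _, .mvar m ts, π, ρ, s => by
      simp only [rename, msubst]
      congr 1; funext j
      induction j using Fin.addCases with
      | left j => simp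
      | right j => simp only [Fin.addCases_right]; exact msubst_rename (ts j) _ _ _
  | _, _, _, .op o ts, π, ρ, s => by
      simp only [rename, msubst]
      congr 1; funext i
      rw [msubst_rename]
      congr 1; funext x
      induction x using Fin.addCases with
      | left x => simp
      | right x => simp

theorem rename_msubst : ∀ {n n' n'' : ℕ} (t : Term S M mar n)
    (ρ : Fin n → Fin n') (s : ∀ m : M, Term S M' mar' (n' + mar m)) (π : Fin n' → Fin n''),
    rename (msubst t ρ s) π
      = msubst t (fun x => π (ρ x)) (fun m => rename (s m) (extRen π (mar m)))
  | _, _, _, .var x, _, _, _ => rfl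
  | _, _, _, .mvar m ts, ρ, s, π => by
      simp only [msubst, rename_subst, subst_rename]
      congr 1; funext x
      induction x using Fin.addCases with
      | left x => simp [rename]
      | right x => simp only [Fin.addCases_right, extRen_natAdd]
                   exact rename_msubst (ts x) _ _ _
  | _, _, _, .op o ts, ρ, s, π => by
      simp only [rename, msubst]
      congr 1; funext i
      rw [rename_msubst]
      congr 1
      · funext x
        induction x using Fin.addCases with
        | left x => simp
        | right x => simp
      · funext m
        rw [rename_rename, rename_rename]
        congr 1; funext x
        induction x using Fin.addCases with
        | left x => simp
        | right x => simp

theorem subst_msubst_key : ∀ {n g p q : ℕ} (t : Term S M mar n)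
    (σ : Fin n → Term S M mar g) (ρ : Fin g → Fin q)
    (s : ∀ m : M, Term S M' mar' (q + mar m))
    (ρ₁ : Fin n → Fin p) (s₁ : ∀ m : M, Term S M' mar' (p + mar m))
    (τ : Fin p → Term S M' mar' q)
    (h1 : ∀ x, τ (ρ₁ x) = msubst (σ x) ρ s)
    (h2 : ∀ m, subst (s₁ m) (extSub τ (mar m)) = s m),
    msubst (subst t σ) ρ s = subst (msubst t ρ₁ s₁) τ
  | _, _, _, _, .var x, σ, ρ, s, ρ₁, s₁, τ, h1, h2 => by
      simp only [subst, msubst]; exact (h1 x).symm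
  | _, _, _, _, .mvar m ts, σ, ρ, s, ρ₁, s₁, τ, h1, h2 => by
      simp only [subst, msubst]
      rw [← h2 m, subst_subst, subst_subst]
      congr 1; funext x
      induction x using Fin.addCases with
      | left x =>
          simp only [extSub_castAdd, weaken, subst_rename]
          rw [show (fun y => Fin.addCases (motive := fun _ => Term S M' mar' _)
                (fun j => Term.var j)
                (fun j => msubst (subst (ts j) σ) ρ s) (Fin.castAdd (mar m) y))
              = fun y => (Term.var y : Term S M' mar' _) from by funext y; simp]
          rw [subst_var]
          simp [subst]
      | right x =>
          simp only [Fin.addCases_right, extSub_natAdd, subst]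
          exact subst_msubst_key (ts x) σ ρ s ρ₁ s₁ τ h1 h2
  | _, _, _, _, .op o ts, σ, ρ, s, ρ₁, s₁, τ, h1, h2 => by
      simp only [subst, msubst]
      congr 1; funext i
      refine subst_msubst_key (ts i) _ _ _ _ _ _ ?_ ?_
      · intro x
        induction x using Fin.addCases with
        | left x =>
            simp only [extRen_castAdd, extSub_castAdd, h1 x, extSub_castAdd, weaken,
              rename_msubst, msubst_rename, midWeak_eq_extRen]
        | right x =>
            simp [msubst]
      · intro m
        rw [← h2 m]
        simp only [subst_rename, rename_subst]
        congr 1; funext x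
        induction x using Fin.addCases with
        | left x =>
            simp only [midWeak_castAdd, extSub_castAdd, weaken, rename_rename, subst_rename,
              midWeak_eq_extRen]
            congr 1
            funext y
            simp
        | right x => simp [rename]

end SO.Term

/-- **Substitution-Metasubstitution Lemma.**
Given terms `𝕞₁:[m₁],…,𝕞_k:[m_k] ▹ Γ ⊢ tᵢ` (`1 ≤ i ≤ n`),
`Θ ▹ Γ, x⃗ⱼ ⊢ sⱼ` (`1 ≤ j ≤ k`, with `x⃗ⱼ` a list of `mⱼ` variables), and
`𝕞₁:[m₁],…,𝕞_k:[m_k] ▹ x₁,…,xₙ ⊢ t`, one has the equality of terms in context `Θ ▹ Γ`: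
`t{xᵢ := tᵢ}{𝕞ⱼ := (x⃗ⱼ)sⱼ} = t{𝕞ⱼ := (x⃗ⱼ)sⱼ}{xᵢ := tᵢ{𝕞ⱼ := (x⃗ⱼ)sⱼ}}`.
Here `Γ` has length `g`; on the right-hand side, `t{𝕞ⱼ := (x⃗ⱼ)sⱼ}` is formed in the
context `Γ,x₁,…,xₙ`, and the subsequent substitution maps `Γ` identically. -/
theorem substitution_metasubstitution_lemma
    {S : SOSig} {k : ℕ} {mar : Fin k → ℕ} {M' : Type} {mar' : M' → ℕ} {n g : ℕ}
    (t : Term S (Fin k) mar n)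
    (ts : Fin n → Term S (Fin k) mar g)
    (s : ∀ j : Fin k, Term S M' mar' (g + mar j)) :
    msubst (subst t ts) id s
      = subst (msubst t (Fin.natAdd g) (fun j => rename (s j) (midWeak g n (mar j))))
          (Fin.addCases (fun i => Term.var i) (fun x => msubst (ts x) id s)) := by
  exact subst_msubst_key t ts id s (Fin.natAdd g)
    (fun j => rename (s j) (midWeak g n (mar j)))
    (Fin.addCases (fun i => Term.var i) (fun x => msubst (ts x) id s))
    (fun x => by simp)
    (fun m => by
      rw [subst_rename]
      have : (fun x => extSub (Fin.addCases (motive := fun _ => Term S M' mar' g)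
          (fun i => Term.var i) (fun x => msubst (ts x) id s)) (mar m) (midWeak g n (mar m) x))
          = fun x => (Term.var x : Term S M' mar' (g + mar m)) := by
        funext x
        induction x using Fin.addCases with
        | left x => simp [weaken, rename]
        | right x => simp
      rw [this, subst_var])
end

section
/- Conservativity: Second-Order Equational Logic is a conservative extension of First-Order Equational Logic: if a second-order equation ∅ ▹ Γ ⊢ s ≡ t between first-order terms in an empty metavariable context is derivable in Second-Order Equational Logic from (the second-order representations of) a set of first-order axioms, then Γ ⊢ s ≡ t is derivable from those axioms in First-Order Equational Logic. -/
namespace SO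

/-- A second-order equation `Θ ▹ Γ ⊢ lhs ≡ rhs` in a metavariable context
`𝕞₁:[m₁],…,𝕞_k:[m_k]` (given by `mlen` and `mar`) and a variable context of size
`ctx`. -/
structure SOEqn (S : SOSig) where
  mlen : ℕ
  mar : Fin mlen → ℕ
  ctx : ℕ
  lhs : Term S (Fin mlen) mar ctx
  rhs : Term S (Fin mlen) mar ctx

/-- The renaming regarding a context `Δ,x⃗` (of size `d + a`) inside `Γ,Δ,x⃗`
(of size `(n + d) + a`). -/
def sideWeak (n d a : ℕ) : Fin (d + a) → Fin (n + d + a) :=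
  Fin.addCases (fun j => Fin.castAdd a (Fin.natAdd n j)) (fun j => Fin.natAdd (n + d) j)

/-- **Second-Order Equational Logic**: derivability of an equation
`Θ ▹ Γ ⊢ s ≡ t` from a set `E` of axioms, by the rules: (Axioms) every axiom is
derivable; (Equivalence) reflexivity, symmetry, transitivity; (Extended
metasubstitution) from `𝕞₁:[m₁],…,𝕞_k:[m_k] ▹ Γ ⊢ s ≡ t` (with `Γ` of size `n`) and
`Θ ▹ Δ, x⃗ᵢ ⊢ σᵢ ≡ τᵢ` (`1 ≤ i ≤ k`, `Δ` of size `d`) derive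
`Θ ▹ Γ, Δ ⊢ s{𝕞ᵢ := (x⃗ᵢ)σᵢ} ≡ t{𝕞ᵢ := (x⃗ᵢ)τᵢ}`. -/
inductive SODeriv (S : SOSig) (E : Set (SOEqn S)) :
    ∀ (k : ℕ) (mar : Fin k → ℕ) (n : ℕ),
      Term S (Fin k) mar n → Term S (Fin k) mar n → Prop
  | ax {e : SOEqn S} (he : e ∈ E) : SODeriv S E e.mlen e.mar e.ctx e.lhs e.rhs
  | refl {k : ℕ} {mar : Fin k → ℕ} {n : ℕ} (t : Term S (Fin k) mar n) :
      SODeriv S E k mar n t t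
  | symm {k : ℕ} {mar : Fin k → ℕ} {n : ℕ} {s t : Term S (Fin k) mar n} :
      SODeriv S E k mar n s t → SODeriv S E k mar n t s
  | trans {k : ℕ} {mar : Fin k → ℕ} {n : ℕ} {s t u : Term S (Fin k) mar n} :
      SODeriv S E k mar n s t → SODeriv S E k mar n t u → SODeriv S E k mar n s u
  | msub {k : ℕ} {mar : Fin k → ℕ} {n : ℕ} {s t : Term S (Fin k) mar n}
      {k' : ℕ} {mar' : Fin k' → ℕ} {d : ℕ}
      {σ τ : ∀ i : Fin k, Term S (Fin k') mar' (d + mar i)} :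
      SODeriv S E k mar n s t →
      (∀ i, SODeriv S E k' mar' (d + mar i) (σ i) (τ i)) →
      SODeriv S E k' mar' (n + d)
        (Term.msubst s (Fin.castAdd d)
          (fun i => Term.rename (σ i) (sideWeak n d (mar i))))
        (Term.msubst t (Fin.castAdd d)
          (fun i => Term.rename (τ i) (sideWeak n d (mar i))))

end SO
namespace SO

/-- First-order terms over a signature (the operators are applied without binding any
variables; this is appropriate for first-order signatures, i.e. signatures all of whose
operators have arities of the form `(0,…,0)`). -/
inductive FOTerm (S : SOSig) (n : ℕ) : Type
  | var : Fin n → FOTerm S n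
  | op (o : S.Op) (ts : Fin (S.arity o).len → FOTerm S n) : FOTerm S n

namespace FOTerm

variable {S : SOSig}

/-- First-order simultaneous substitution of terms for variables. -/
def subst {n m : ℕ} : FOTerm S n → (Fin n → FOTerm S m) → FOTerm S m
  | .var x, σ => σ x
  | .op o ts, σ => .op o (fun i => subst (ts i) σ)

/-- The second-order representation `∅ ▹ Γ ⊢ t` of a first-order term `Γ ⊢ t`
(empty metavariable context; the vacuous weakenings `Fin.castAdd` account for the
`nᵢ = 0` variables bound by each operator). -/
def toSO {n : ℕ} : FOTerm S n → Term S (Fin 0) (fun i => i.elim0) n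
  | .var x => .var x
  | .op o ts => .op o (fun i => Term.rename (toSO (ts i)) (Fin.castAdd _))

end FOTerm

/-- A first-order equation in context. -/
structure FOEqn (S : SOSig) where
  ctx : ℕ
  lhs : FOTerm S ctx
  rhs : FOTerm S ctx

/-- **First-Order Equational Logic**: derivability from a set of first-order axioms by
reflexivity, symmetry, transitivity, congruence for operators, and substitution of
terms for variables. -/
inductive FODeriv (S : SOSig) (E : Set (FOEqn S)) : ∀ n : ℕ, FOTerm S n → FOTerm S n → Prop
  | ax {e : FOEqn S} (he : e ∈ E) : FODeriv S E e.ctx e.lhs e.rhs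
  | refl {n : ℕ} (t : FOTerm S n) : FODeriv S E n t t
  | symm {n : ℕ} {s t : FOTerm S n} : FODeriv S E n s t → FODeriv S E n t s
  | trans {n : ℕ} {s t u : FOTerm S n} :
      FODeriv S E n s t → FODeriv S E n t u → FODeriv S E n s u
  | congr {n : ℕ} (o : S.Op) {ts us : Fin (S.arity o).len → FOTerm S n} :
      (∀ i, FODeriv S E n (ts i) (us i)) → FODeriv S E n (.op o ts) (.op o us)
  | subst {n m : ℕ} {s t : FOTerm S n} (σ : Fin n → FOTerm S m) :
      FODeriv S E n s t → FODeriv S E m (s.subst σ) (t.subst σ)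

end SO

namespace SO

variable {S : SOSig}

/-! ### Helpers for empty binding arities -/

/-- Shrink a `Fin (n + p)` to a `Fin n` when `p = 0`. -/
def shrink {n p : ℕ} (_h : p = 0) (j : Fin (n + p)) : Fin n :=
  ⟨j.val, by omega⟩

theorem shrink_castAdd {n p : ℕ} (h : p = 0) (x : Fin n) :
    shrink h (Fin.castAdd p x) = x := by
  apply Fin.ext; simp [shrink]

theorem addCases_eq0 {n p : ℕ} (h : p = 0) {α : Sort*} (f : Fin n → α) (g : Fin p → α)
    (j : Fin (n + p)) : Fin.addCases f g j = f (shrink h j) := by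
  have hj : j = Fin.castAdd p (shrink h j) := by apply Fin.ext; simp [shrink]
  conv_lhs => rw [hj]
  exact Fin.addCases_left _

/-! ### First-order substitution lemmas -/

namespace FOTerm

theorem subst_ext {n m : ℕ} (t : FOTerm S n) {σ τ : Fin n → FOTerm S m}
    (h : ∀ x, σ x = τ x) : t.subst σ = t.subst τ := by
  induction t with
  | var x => simpa [subst] using h x
  | op o ts ih => simp only [subst]; exact congrArg _ (funext ih)

theorem subst_id {n : ℕ} (t : FOTerm S n) {σ : Fin n → FOTerm S n}
    (h : ∀ x, σ x = .var x) : t.subst σ = t := by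
  induction t with
  | var x => simpa [subst] using h x
  | op o ts ih => simp only [subst]; exact congrArg _ (funext ih)

theorem subst_subst {n m k : ℕ} (t : FOTerm S n) (σ : Fin n → FOTerm S m)
    (τ : Fin m → FOTerm S k) :
    (t.subst σ).subst τ = t.subst (fun x => (σ x).subst τ) := by
  induction t with
  | var x => rfl
  | op o ts ih => simp only [subst]; exact congrArg _ (funext ih)

end FOTerm

theorem FODeriv.substPointwise {E : Set (FOEqn S)} {n m : ℕ} (t : FOTerm S n)
    {σ τ : Fin n → FOTerm S m} (h : ∀ x, FODeriv S E m (σ x) (τ x)) :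
    FODeriv S E m (t.subst σ) (t.subst τ) := by
  induction t with
  | var x => exact h x
  | op o ts ih => exact .congr o ih

theorem FODeriv.subst₂ {E : Set (FOEqn S)} {n m : ℕ} {s t : FOTerm S n}
    {σ τ : Fin n → FOTerm S m} (hst : FODeriv S E n s t)
    (h : ∀ x, FODeriv S E m (σ x) (τ x)) :
    FODeriv S E m (s.subst σ) (t.subst τ) :=
  (FODeriv.subst σ hst).trans (FODeriv.substPointwise t h)

/-! ### Interpretation of second-order terms as first-order terms -/

variable (hFO : ∀ (o : S.Op) (i : Fin (S.arity o).len), (S.arity o).ar i = 0)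

/-- Interpret a second-order term over a first-order signature, given a first-order
substitution for the variables and a first-order instantiation of the metavariables. -/
def interp {M : Type} {mar : M → ℕ} : ∀ {n n' : ℕ}, Term S M mar n →
    (Fin n → FOTerm S n') → (∀ m : M, FOTerm S (n' + mar m)) → FOTerm S n'
  | _, _, .var x, ev, _ => ev x
  | _, _, .mvar m ts, ev, em =>
      (em m).subst (Fin.addCases .var (fun j => interp (ts j) ev em))
  | _, _, .op o ts, ev, em =>
      .op o (fun i => interp (ts i) (fun j => ev (shrink (hFO o i) j)) em)

/-- Extend a first-order substitution by `p` fresh variables. -/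
def extEv {n n' : ℕ} (ev : Fin n → FOTerm S n') (p : ℕ) :
    Fin (n + p) → FOTerm S (n' + p) :=
  Fin.addCases (fun j => (ev j).subst (fun x => .var (Fin.castAdd p x)))
    (fun j => .var (Fin.natAdd n' j))

theorem interp_ext {M : Type} {mar : M → ℕ} {n n' : ℕ} (t : Term S M mar n)
    {ev ev' : Fin n → FOTerm S n'} {em em' : ∀ m : M, FOTerm S (n' + mar m)}
    (h : ∀ x, ev x = ev' x) (h' : ∀ m, em m = em' m) :
    interp hFO t ev em = interp hFO t ev' em' := by
  have : ev = ev' := funext h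
  have : em = em' := funext h'
  subst this; subst ‹ev = ev'›; rfl

theorem interp_rename {M : Type} {mar : M → ℕ} : ∀ {n n₁ n' : ℕ}
    (t : Term S M mar n) (ρ : Fin n → Fin n₁) (ev : Fin n₁ → FOTerm S n')
    (em : ∀ m : M, FOTerm S (n' + mar m)),
    interp hFO (t.rename ρ) ev em = interp hFO t (fun x => ev (ρ x)) em
  | _, _, _, .var x, ρ, ev, em => rfl
  | _, _, _, .mvar m ts, ρ, ev, em => by
      simp only [Term.rename, interp]
      refine congrArg _ (funext fun y => ?_)
      induction y using Fin.addCases with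
      | left y => simp
      | right j =>
          simp only [Fin.addCases_right]
          exact interp_rename (ts j) ρ ev em
  | _, _, _, .op o ts, ρ, ev, em => by
      simp only [Term.rename, interp]
      refine congrArg _ (funext fun i => ?_)
      rw [interp_rename (ts i) (Term.extRen ρ _) _ em]
      refine interp_ext hFO _ (fun x => ?_) (fun _ => rfl)
      rw [Term.extRen, addCases_eq0 (hFO o i), shrink_castAdd]

theorem interp_subst {M : Type} {mar : M → ℕ} : ∀ {n n₁ n' : ℕ}
    (t : Term S M mar n) (χ : Fin n → Term S M mar n₁) (ev : Fin n₁ → FOTerm S n')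
    (em : ∀ m : M, FOTerm S (n' + mar m)),
    interp hFO (t.subst χ) ev em
      = interp hFO t (fun x => interp hFO (χ x) ev em) em
  | _, _, _, .var x, χ, ev, em => rfl
  | _, _, _, .mvar m ts, χ, ev, em => by
      simp only [Term.subst, interp]
      refine congrArg _ (funext fun y => ?_)
      induction y using Fin.addCases with
      | left y => simp
      | right j =>
          simp only [Fin.addCases_right]
          exact interp_subst (ts j) χ ev em
  | _, _, _, .op o ts, χ, ev, em => by
      simp only [Term.subst, interp]
      refine congrArg _ (funext fun i => ?_)
      rw [interp_subst (ts i) (Term.extSub χ _) _ em]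
      refine interp_ext hFO _ (fun x => ?_) (fun _ => rfl)
      rw [Term.extSub, addCases_eq0 (hFO o i), Term.weaken,
        interp_rename hFO _ (Fin.castAdd _) _ em]
      exact interp_ext hFO _ (fun y => by rw [shrink_castAdd]) (fun _ => rfl)

/-- Substituting after interpreting. -/
theorem interp_fsubst {M : Type} {mar : M → ℕ} : ∀ {n n' n'' : ℕ}
    (t : Term S M mar n) (ev : Fin n → FOTerm S n')
    (em : ∀ m : M, FOTerm S (n' + mar m)) (κ : Fin n' → FOTerm S n''),
    (interp hFO t ev em).subst κ
      = interp hFO t (fun x => (ev x).subst κ)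
          (fun m => (em m).subst (extEv κ (mar m)))
  | _, _, _, .var x, ev, em, κ => rfl
  | _, _, _, .mvar m ts, ev, em, κ => by
      simp only [interp, FOTerm.subst_subst]
      refine congrArg _ (funext fun y => ?_)
      induction y using Fin.addCases with
      | left y =>
          simp only [Fin.addCases_left, extEv, FOTerm.subst_subst, FOTerm.subst]
          refine (FOTerm.subst_id _ (fun z => ?_)).symm
          simp [FOTerm.subst, Fin.addCases_left]
      | right j =>
          simp only [Fin.addCases_right, extEv, FOTerm.subst]
          exact interp_fsubst (ts j) ev em κ
  | _, _, _, .op o ts, ev, em, κ => by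
      simp only [interp, FOTerm.subst]
      exact congrArg _ (funext fun i => interp_fsubst (ts i) _ em κ)

/-- Interpretation of a metasubstitution. -/
theorem interp_msubst {M M' : Type} {mar : M → ℕ} {mar' : M' → ℕ} : ∀ {n n₁ n'' : ℕ}
    (s : Term S M mar n) (ρ : Fin n → Fin n₁)
    (θ : ∀ m : M, Term S M' mar' (n₁ + mar m))
    (ev : Fin n₁ → FOTerm S n'') (em : ∀ m' : M', FOTerm S (n'' + mar' m')),
    interp hFO (s.msubst ρ θ) ev em
      = interp hFO s (fun x => ev (ρ x))
          (fun m => interp hFO (θ m) (extEv ev (mar m))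
            (fun m' => (em m').subst (fun y => .var (Term.midWeak n'' (mar m) (mar' m') y))))
  | _, _, _, .var x, ρ, θ, ev, em => rfl
  | _, _, _, .mvar m ts, ρ, θ, ev, em => by
      simp only [Term.msubst, interp]
      rw [interp_subst hFO (θ m) _ ev em, interp_fsubst hFO (θ m) _ _ _]
      refine interp_ext hFO _ (fun x => ?_) (fun m' => ?_)
      · induction x using Fin.addCases with
        | left x =>
            simp only [Fin.addCases_left, interp, extEv, FOTerm.subst_subst]
            refine (FOTerm.subst_id _ (fun z => ?_)).symm
            simp [FOTerm.subst, Fin.addCases_left]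
        | right j =>
            simp only [Fin.addCases_right, extEv, FOTerm.subst]
            exact interp_msubst (ts j) ρ θ ev em
      · rw [FOTerm.subst_subst]
        refine (FOTerm.subst_id _ (fun y => ?_)).symm
        induction y using Fin.addCases with
        | left y =>
            simp only [Term.midWeak, FOTerm.subst, Fin.addCases_left, extEv,
              FOTerm.subst_subst]
        | right j =>
            simp [Term.midWeak, FOTerm.subst, Fin.addCases_right, extEv]
  | _, _, _, .op o ts, ρ, θ, ev, em => by
      simp only [Term.msubst, interp]
      refine congrArg _ (funext fun i => ?_)
      rw [interp_msubst (ts i) (Term.extRen ρ _) _ _ em]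
      refine interp_ext hFO _ (fun x => ?_) (fun m => ?_)
      · rw [Term.extRen, addCases_eq0 (hFO o i), shrink_castAdd]
      · rw [interp_rename hFO (θ m) _ _ _]
        refine interp_ext hFO _ (fun y => ?_) (fun _ => rfl)
        induction y using Fin.addCases with
        | left y =>
            simp only [extEv, Fin.addCases_left, Term.midWeak]
            rw [shrink_castAdd]
        | right j =>
            simp only [extEv, Fin.addCases_right, Term.midWeak]

theorem interp_toSO {n n' : ℕ} (u : FOTerm S n) (ev : Fin n → FOTerm S n')
    (em : ∀ m : Fin 0, FOTerm S (n' + m.elim0)) :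
    interp hFO u.toSO ev em = u.subst ev := by
  induction u with
  | var x => rfl
  | op o ts ih =>
      simp only [FOTerm.toSO, interp, FOTerm.subst]
      refine congrArg _ (funext fun i => ?_)
      rw [interp_rename hFO _ (Fin.castAdd _) _ em]
      rw [interp_ext hFO _ (fun y => by rw [shrink_castAdd]) (fun _ => rfl)]
      exact ih i

theorem interp_emDeriv {E : Set (FOEqn S)} {M : Type} {mar : M → ℕ} :
    ∀ {n n' : ℕ} (t : Term S M mar n) (ev : Fin n → FOTerm S n')
      {em em' : ∀ m : M, FOTerm S (n' + mar m)}
      (h : ∀ m, FODeriv S E (n' + mar m) (em m) (em' m)),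
      FODeriv S E n' (interp hFO t ev em) (interp hFO t ev em')
  | _, _, .var x, ev, em, em', h => .refl _
  | _, _, .mvar m ts, ev, em, em', h => by
      simp only [interp]
      refine FODeriv.subst₂ (h m) (fun y => ?_)
      induction y using Fin.addCases with
      | left y => simp only [Fin.addCases_left]; exact .refl _
      | right j => simp only [Fin.addCases_right]; exact interp_emDeriv (ts j) ev h
  | _, _, .op o ts, ev, em, em', h => by
      simp only [interp]
      exact .congr o (fun i => interp_emDeriv (ts i) _ h)

/-! ### Main induction -/

theorem SODeriv.toFO {E : Set (FOEqn S)} {k : ℕ} {mar : Fin k → ℕ} {n : ℕ}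
    {s t : Term S (Fin k) mar n}
    (h : SODeriv S
      {e' : SOEqn S | ∃ e ∈ E, e' = ⟨0, fun i => i.elim0, e.ctx, e.lhs.toSO, e.rhs.toSO⟩}
      k mar n s t) :
    ∀ {n' : ℕ} (ev : Fin n → FOTerm S n') (em em' : ∀ m, FOTerm S (n' + mar m)),
      (∀ m, FODeriv S E (n' + mar m) (em m) (em' m)) →
      FODeriv S E n' (interp hFO s ev em) (interp hFO t ev em') := by
  induction h with
  | ax he =>
      intro n' ev em em' _
      obtain ⟨e, heE, rfl⟩ := he
      show FODeriv S E n' (interp hFO e.lhs.toSO ev em) (interp hFO e.rhs.toSO ev em')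
      rw [interp_toSO, interp_toSO]
      exact FODeriv.subst ev (.ax heE)
  | refl t =>
      intro n' ev em em' hm
      exact interp_emDeriv hFO t ev hm
  | symm h ih =>
      intro n' ev em em' hm
      exact (ih ev em' em (fun m => (hm m).symm)).symm
  | trans _ _ ih₁ ih₂ =>
      intro n' ev em em' hm
      exact (ih₁ ev em em (fun m => .refl _)).trans (ih₂ ev em em' hm)
  | @msub k mar n s t k' mar' d σ τ _ _ ih ihστ =>
      intro n' ev em em' hm
      rw [interp_msubst, interp_msubst]
      refine ih _ _ _ (fun m => ?_)
      rw [interp_rename, interp_rename]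
      refine ihστ m _ _ _ (fun m' => ?_)
      exact FODeriv.subst _ (hm m')

end SO

open SO SO.Term

/-- **Conservativity.**
Second-Order Equational Logic is a conservative extension of First-Order Equational
Logic: for a first-order signature `S` (every operator binds no variables, i.e. all
arities are `(0,…,0)`) and a set `E` of first-order axioms, if the second-order
equation `∅ ▹ Γ ⊢ s ≡ t` between (the second-order representations of) first-order
terms, in the empty metavariable context, is derivable in Second-Order Equational Logic
from the second-order representations of the axioms in `E`, then `Γ ⊢ s ≡ t` is
derivable from `E` in First-Order Equational Logic. -/
theorem second_order_conservativity
    {S : SOSig} (hFO : ∀ (o : S.Op) (i : Fin (S.arity o).len), (S.arity o).ar i = 0)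
    (E : Set (FOEqn S)) {n : ℕ} (s t : FOTerm S n)
    (h : SODeriv S
      {e' : SOEqn S | ∃ e ∈ E, e' = ⟨0, fun i => i.elim0, e.ctx, e.lhs.toSO, e.rhs.toSO⟩}
      0 (fun i => i.elim0) n s.toSO t.toSO) :
    FODeriv S E n s t := by
  have key := SODeriv.toFO hFO h (fun x => .var x)
    (fun m => m.elim0) (fun m => m.elim0) (fun m => m.elim0)
  rw [interp_toSO, interp_toSO, FOTerm.subst_id s (fun _ => rfl),
    FOTerm.subst_id t (fun _ => rfl)] at key
  exact key
end
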